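/- arXiv:1301.5716 — 6 statements merged into one kernel-verified Lean document; each statement's English description precedes it below -/
import Mathlib

section
/- Let p_{i,j} (i,j ∈ {-1,0,1}, with p_{0,0}=0) be nonnegative reals summing to 1, and let f : Z_+^2 → R satisfy (P1) and (P2). Then in the ring of formal power series R[[x,y]] the identity L(x,y)·H(x,y) = L(x,0)·H(x,0) + L(0,y)·H(0,y) − L(0,0)·H(0,0) holds, where H(x,y) = Σ_{i0,j0≥1} f(i0,j0) x^{i0−1} y^{j0−1}, H(x,0) = Σ_{i0≥1} f(i0,1) x^{i0−1}, H(0,y) = Σ_{j0≥1} f(1,j0) y^{j0−1}, and H(0,0) = f(1,1). -/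
open Finset MvPowerSeries

/-- The kernel `L(x,y) = Σ p_{i,j} x^{1-i} y^{1-j} − x·y` as a formal power series in two
variables. -/
noncomputable def kernelL (p : ℤ → ℤ → ℝ) : MvPowerSeries (Fin 2) ℝ :=
  (∑ i ∈ Finset.Icc (-1 : ℤ) 1, ∑ j ∈ Finset.Icc (-1 : ℤ) 1,
      MvPowerSeries.C (σ := Fin 2) (R := ℝ) (p i j) * MvPowerSeries.X 0 ^ (1 - i).toNat *
        MvPowerSeries.X 1 ^ (1 - j).toNat) -
    MvPowerSeries.X 0 * MvPowerSeries.X 1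

/-- `H(x,y) = Σ_{i0,j0 ≥ 1} f(i0,j0) x^{i0-1} y^{j0-1}`. -/
noncomputable def Hxy (f : ℤ → ℤ → ℝ) : MvPowerSeries (Fin 2) ℝ :=
  fun d => f ((d 0 : ℤ) + 1) ((d 1 : ℤ) + 1)

/-- `H(x,0) = Σ_{i0 ≥ 1} f(i0,1) x^{i0-1}`. -/
noncomputable def Hx0 (f : ℤ → ℤ → ℝ) : MvPowerSeries (Fin 2) ℝ :=
  fun d => if d 1 = 0 then f ((d 0 : ℤ) + 1) 1 else 0

/-- `H(0,y) = Σ_{j0 ≥ 1} f(1,j0) y^{j0-1}`. -/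
noncomputable def H0y (f : ℤ → ℤ → ℝ) : MvPowerSeries (Fin 2) ℝ :=
  fun d => if d 0 = 0 then f 1 ((d 1 : ℤ) + 1) else 0

/-- `L(x,0) = p_{-1,1} x² + p_{0,1} x + p_{1,1}`. -/
noncomputable def Lx0 (p : ℤ → ℤ → ℝ) : MvPowerSeries (Fin 2) ℝ :=
  MvPowerSeries.C (σ := Fin 2) (R := ℝ) (p (-1) 1) * MvPowerSeries.X 0 ^ 2 +
    MvPowerSeries.C (σ := Fin 2) (R := ℝ) (p 0 1) * MvPowerSeries.X 0 + MvPowerSeries.C (σ := Fin 2) (R := ℝ) (p 1 1)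

/-- `L(0,y) = p_{1,-1} y² + p_{1,0} y + p_{1,1}`. -/
noncomputable def L0y (p : ℤ → ℤ → ℝ) : MvPowerSeries (Fin 2) ℝ :=
  MvPowerSeries.C (σ := Fin 2) (R := ℝ) (p 1 (-1)) * MvPowerSeries.X 1 ^ 2 +
    MvPowerSeries.C (σ := Fin 2) (R := ℝ) (p 1 0) * MvPowerSeries.X 1 + MvPowerSeries.C (σ := Fin 2) (R := ℝ) (p 1 1)

/-!
Read a power series in `x = X 0`, `y = X 1` as its coefficient function on `ℤ × ℤ`, ignoring
negative exponents. For coefficient functions vanishing at negative arguments, multiplication by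
`c xᵃ yᵇ` is a shift, so every product in the identity becomes a shifted sum of coefficients.
Extend `f` by zero off the open quadrant to `F = interiorPart f`. The coefficient of `xᵐ yⁿ` in
`L·H` is then `Σ p_{i,j} F(m+i, n+j) − F(m,n)`: for `m, n ≥ 1` this vanishes by (P1), since by
(P2) `F = f` on the closed quadrant, while on the axes only the row `i = 1` or the column `j = 1`
of the kernel survives, which gives the coefficients of `L(x,0)H(x,0)` and `L(0,y)H(0,y)`, with
the constant term counted twice.
-/

section SeriesOf

variable {R : Type*} [CommSemiring R]

noncomputable def seriesOf : (ℤ → ℤ → R) →ₗ[R] MvPowerSeries (Fin 2) R where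
  toFun g d := g (d 0) (d 1)
  map_add' _ _ := rfl
  map_smul' _ _ := rfl

theorem coeff_seriesOf (g : ℤ → ℤ → R) (d : Fin 2 →₀ ℕ) :
    coeff d (seriesOf g) = g (d 0) (d 1) := rfl

theorem seriesOf_congr {g g' : ℤ → ℤ → R} (h : ∀ m n : ℕ, g m n = g' m n) :
    seriesOf g = seriesOf g' :=
  ext fun d => h (d 0) (d 1)

theorem C_eq_seriesOf (c : R) :
    (C c : MvPowerSeries (Fin 2) R) = seriesOf fun m n => if m = 0 ∧ n = 0 then c else 0 := by
  ext d
  rw [coeff_C, coeff_seriesOf]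
  simp [Finsupp.ext_iff, Fin.forall_fin_two]

theorem C_mul_X_pow_mul_X_pow_mul_seriesOf {g : ℤ → ℤ → R}
    (hg : ∀ m n, m < 0 ∨ n < 0 → g m n = 0) (c : R) (a b : ℕ) :
    C c * X 0 ^ a * X 1 ^ b * seriesOf g = seriesOf fun m n => c * g (m - a) (n - b) := by
  have hmon : (C c : MvPowerSeries (Fin 2) R) * X 0 ^ a * X 1 ^ b =
      monomial (Finsupp.single 0 a + Finsupp.single 1 b) c := by
    rw [X_pow_eq, X_pow_eq, ← monomial_zero_eq_C_apply, monomial_mul_monomial,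
      monomial_mul_monomial, zero_add, mul_one, mul_one]
  ext d
  rw [hmon, coeff_monomial_mul, coeff_seriesOf, coeff_seriesOf]
  split_ifs with hle
  · have ha : a ≤ d 0 := by simpa using hle 0
    have hb : b ≤ d 1 := by simpa using hle 1
    simp [Nat.cast_sub ha, Nat.cast_sub hb]
  · rw [hg _ _ ?_, mul_zero]
    contrapose! hle
    intro i
    fin_cases i <;> simp <;> omega

end SeriesOf

theorem sum_Icc_neg_one_one {M : Type*} [AddCommMonoid M] (g : ℤ → M) :
    ∑ i ∈ Icc (-1 : ℤ) 1, g i = g (-1) + g 0 + g 1 := by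
  rw [show Icc (-1 : ℤ) 1 = {-1, 0, 1} by decide, sum_insert (by decide),
    sum_insert (by decide), sum_singleton, add_assoc]

def interiorPart {M : Type*} [Zero M] (f : ℤ → ℤ → M) (a b : ℤ) : M :=
  if 1 ≤ a ∧ 1 ≤ b then f a b else 0

theorem Hxy_eq_seriesOf (f : ℤ → ℤ → ℝ) :
    Hxy f = seriesOf fun m n => interiorPart f (m + 1) (n + 1) := by
  ext d
  rw [coeff_seriesOf, coeff_apply]
  simp [Hxy, interiorPart]

theorem Hx0_eq_seriesOf (f : ℤ → ℤ → ℝ) :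
    Hx0 f = seriesOf fun m n => if n = 0 then interiorPart f (m + 1) 1 else 0 := by
  ext d
  rw [coeff_seriesOf, coeff_apply]
  simp [Hx0, interiorPart]

theorem H0y_eq_seriesOf (f : ℤ → ℤ → ℝ) :
    H0y f = seriesOf fun m n => if m = 0 then interiorPart f 1 (n + 1) else 0 := by
  ext d
  rw [coeff_seriesOf, coeff_apply]
  simp [H0y, interiorPart]

theorem kernelL_mul_Hxy (p f : ℤ → ℤ → ℝ) :
    kernelL p * Hxy f = seriesOf fun m n =>
      (∑ i ∈ Icc (-1 : ℤ) 1, ∑ j ∈ Icc (-1 : ℤ) 1,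
        p i j * interiorPart f (m + i) (n + j)) - interiorPart f m n := by
  have hsupp : ∀ m n : ℤ, m < 0 ∨ n < 0 → interiorPart f (m + 1) (n + 1) = 0 := by
    intro m n h
    rw [interiorPart, if_neg (by omega)]
  have hXY : (X 0 * X 1 : MvPowerSeries (Fin 2) ℝ) = C 1 * X 0 ^ 1 * X 1 ^ 1 := by simp
  rw [kernelL, Hxy_eq_seriesOf, sub_mul, sum_mul, hXY]
  simp_rw [sum_mul, C_mul_X_pow_mul_X_pow_mul_seriesOf hsupp, ← map_sum, ← map_sub]
  refine seriesOf_congr fun m n => ?_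
  simp only [Pi.sub_apply, Finset.sum_apply]
  congr 1
  · refine sum_congr rfl fun i hi => sum_congr rfl fun j hj => ?_
    simp only [mem_Icc] at hi hj
    rw [Int.toNat_of_nonneg (by omega), Int.toNat_of_nonneg (by omega)]
    ring_nf
  · simp

theorem Lx0_mul_Hx0 (p f : ℤ → ℤ → ℝ) :
    Lx0 p * Hx0 f = seriesOf fun m n =>
      if n = 0 then ∑ i ∈ Icc (-1 : ℤ) 1, p i 1 * interiorPart f (m + i) 1 else 0 := by
  have hsupp : ∀ m n : ℤ, m < 0 ∨ n < 0 →
      (if n = 0 then interiorPart f (m + 1) 1 else 0) = 0 := by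
    intro m n h
    simp only [interiorPart]
    split_ifs <;> first | rfl | omega
  have hL : Lx0 p = C (p (-1) 1) * X 0 ^ 2 * X 1 ^ 0 + C (p 0 1) * X 0 ^ 1 * X 1 ^ 0 +
      C (p 1 1) * X 0 ^ 0 * X 1 ^ 0 := by
    simp [Lx0]
  rw [hL, Hx0_eq_seriesOf, add_mul, add_mul]
  simp_rw [C_mul_X_pow_mul_X_pow_mul_seriesOf hsupp, ← map_add]
  refine seriesOf_congr fun m n => ?_
  rw [sum_Icc_neg_one_one]
  simp only [Pi.add_apply, Nat.cast_zero, sub_zero]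
  split_ifs <;> ring_nf

theorem L0y_mul_H0y (p f : ℤ → ℤ → ℝ) :
    L0y p * H0y f = seriesOf fun m n =>
      if m = 0 then ∑ j ∈ Icc (-1 : ℤ) 1, p 1 j * interiorPart f 1 (n + j) else 0 := by
  have hsupp : ∀ m n : ℤ, m < 0 ∨ n < 0 →
      (if m = 0 then interiorPart f 1 (n + 1) else 0) = 0 := by
    intro m n h
    simp only [interiorPart]
    split_ifs <;> first | rfl | omega
  have hL : L0y p = C (p 1 (-1)) * X 0 ^ 0 * X 1 ^ 2 + C (p 1 0) * X 0 ^ 0 * X 1 ^ 1 +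
      C (p 1 1) * X 0 ^ 0 * X 1 ^ 0 := by
    simp [L0y]
  rw [hL, H0y_eq_seriesOf, add_mul, add_mul]
  simp_rw [C_mul_X_pow_mul_X_pow_mul_seriesOf hsupp, ← map_add]
  refine seriesOf_congr fun m n => ?_
  rw [sum_Icc_neg_one_one]
  simp only [Pi.add_apply, Nat.cast_zero, sub_zero]
  split_ifs <;> ring_nf

theorem interiorPart_of_nonneg {M : Type*} [Zero M] {f : ℤ → ℤ → M}
    (hP2 : ∀ i0 j0 : ℤ, 0 ≤ i0 → 0 ≤ j0 → i0 * j0 = 0 → f i0 j0 = 0) {a b : ℤ}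
    (ha : 0 ≤ a) (hb : 0 ≤ b) : interiorPart f a b = f a b := by
  unfold interiorPart
  split_ifs
  · rfl
  · exact (hP2 a b ha hb (mul_eq_zero.mpr (by omega))).symm

theorem interiorPart_harmonic {p f : ℤ → ℤ → ℝ}
    (hP1 : ∀ i0 j0 : ℤ, 1 ≤ i0 → 1 ≤ j0 →
      f i0 j0 = ∑ i ∈ Icc (-1 : ℤ) 1, ∑ j ∈ Icc (-1 : ℤ) 1, p i j * f (i0 + i) (j0 + j))
    (hP2 : ∀ i0 j0 : ℤ, 0 ≤ i0 → 0 ≤ j0 → i0 * j0 = 0 → f i0 j0 = 0) {m n : ℤ}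
    (hm : 1 ≤ m) (hn : 1 ≤ n) :
    ∑ i ∈ Icc (-1 : ℤ) 1, ∑ j ∈ Icc (-1 : ℤ) 1, p i j * interiorPart f (m + i) (n + j) =
      interiorPart f m n := by
  rw [interiorPart, if_pos ⟨hm, hn⟩, hP1 m n hm hn]
  refine sum_congr rfl fun i hi => sum_congr rfl fun j hj => ?_
  simp only [mem_Icc] at hi hj
  rw [interiorPart_of_nonneg hP2 (by omega) (by omega)]

theorem functional_equation_coeff {p f : ℤ → ℤ → ℝ}
    (hP1 : ∀ i0 j0 : ℤ, 1 ≤ i0 → 1 ≤ j0 →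
      f i0 j0 = ∑ i ∈ Icc (-1 : ℤ) 1, ∑ j ∈ Icc (-1 : ℤ) 1, p i j * f (i0 + i) (j0 + j))
    (hP2 : ∀ i0 j0 : ℤ, 0 ≤ i0 → 0 ≤ j0 → i0 * j0 = 0 → f i0 j0 = 0) (m n : ℕ) :
    (∑ i ∈ Icc (-1 : ℤ) 1, ∑ j ∈ Icc (-1 : ℤ) 1,
        p i j * interiorPart f (m + i) (n + j)) - interiorPart f m n =
      ((if n = 0 then ∑ i ∈ Icc (-1 : ℤ) 1, p i 1 * interiorPart f (m + i) 1 else 0) +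
        if m = 0 then ∑ j ∈ Icc (-1 : ℤ) 1, p 1 j * interiorPart f 1 (n + j) else 0) -
        if m = 0 ∧ n = 0 then p 1 1 * f 1 1 else 0 := by
  rcases Nat.eq_zero_or_pos m with rfl | hm <;> rcases Nat.eq_zero_or_pos n with rfl | hn
  · simp [sum_Icc_neg_one_one, interiorPart]
  · simp [sum_Icc_neg_one_one, interiorPart]
  · simp [sum_Icc_neg_one_one, interiorPart]
  · rw [interiorPart_harmonic hP1 hP2 (by omega) (by omega)]
    simp [hm.ne', hn.ne']

theorem functional_equation_general (p : ℤ → ℤ → ℝ)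
    (f : ℤ → ℤ → ℝ)
    (hP1 : ∀ i0 j0 : ℤ, 1 ≤ i0 → 1 ≤ j0 →
      f i0 j0 = ∑ i ∈ Finset.Icc (-1 : ℤ) 1, ∑ j ∈ Finset.Icc (-1 : ℤ) 1,
        p i j * f (i0 + i) (j0 + j))
    (hP2 : ∀ i0 j0 : ℤ, 0 ≤ i0 → 0 ≤ j0 → i0 * j0 = 0 → f i0 j0 = 0) :
    kernelL p * Hxy f =
      Lx0 p * Hx0 f + L0y p * H0y f - MvPowerSeries.C (σ := Fin 2) (R := ℝ) (p 1 1) *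
        MvPowerSeries.C (σ := Fin 2) (R := ℝ) (f 1 1) := by
  rw [kernelL_mul_Hxy, Lx0_mul_Hx0, L0y_mul_H0y, ← map_mul, C_eq_seriesOf, ← map_add,
    ← map_sub]
  refine seriesOf_congr fun m n => ?_
  simpa only [Pi.add_apply, Pi.sub_apply, Nat.cast_eq_zero] using
    functional_equation_coeff hP1 hP2 m n

theorem functional_equation (p : ℤ → ℤ → ℝ)
    (hp_nonneg : ∀ i j : ℤ, 0 ≤ p i j) (hp00 : p 0 0 = 0)
    (hp_sum : ∑ i ∈ Finset.Icc (-1 : ℤ) 1, ∑ j ∈ Finset.Icc (-1 : ℤ) 1, p i j = 1)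
    (f : ℤ → ℤ → ℝ)
    (hP1 : ∀ i0 j0 : ℤ, 1 ≤ i0 → 1 ≤ j0 →
      f i0 j0 = ∑ i ∈ Finset.Icc (-1 : ℤ) 1, ∑ j ∈ Finset.Icc (-1 : ℤ) 1,
        p i j * f (i0 + i) (j0 + j))
    (hP2 : ∀ i0 j0 : ℤ, 0 ≤ i0 → 0 ≤ j0 → i0 * j0 = 0 → f i0 j0 = 0) :
    kernelL p * Hxy f =
      Lx0 p * Hx0 f + L0y p * H0y f - MvPowerSeries.C (σ := Fin 2) (R := ℝ) (p 1 1) *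
        MvPowerSeries.C (σ := Fin 2) (R := ℝ) (f 1 1) :=
  functional_equation_general p f hP1 hP2
end

section
/- Let the walk satisfy (H1), and let f : Z_+^2 → R be nonnegative and satisfy (P1) and (P2). Then for all points a, b in the open quadrant (Z_{≥1})², one has the Harnack-type inequality f(b)·G(a,b) ≤ f(a)·G(b,b), where the products are taken in [0,∞]. -/
open Finset
open scoped ENNReal

/-- `killedStep p n a b` is the `n`-step transition probability from `a` to `b` of the walk
with jumps `p`, killed at the boundary of the quarter plane: the sum, over all sequences of
`n` small steps whose partial sums starting from `a` stay in the open quadrant and lead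
to `b`, of the product of the step probabilities. -/
noncomputable def killedStep (p : ℤ → ℤ → ℝ) (n : ℕ) (a b : ℤ × ℤ) : ℝ :=
  ∑ e : Fin n → (Finset.Icc ((-1, -1) : ℤ × ℤ) (1, 1)),
    if (∀ k : Fin n, 1 ≤ (a + ∑ l ∈ Finset.Iic k, (e l : ℤ × ℤ)).1 ∧
          1 ≤ (a + ∑ l ∈ Finset.Iic k, (e l : ℤ × ℤ)).2) ∧
        a + (∑ l : Fin n, (e l : ℤ × ℤ)) = b then
      ∏ k : Fin n, p (e k : ℤ × ℤ).1 (e k : ℤ × ℤ).2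
    else 0

/-- The Green function (with values in `[0,∞]`) of the walk killed at the boundary of the
quarter plane. -/
noncomputable def greenFn (p : ℤ → ℤ → ℝ) (a b : ℤ × ℤ) : ℝ≥0∞ :=
  ∑' n : ℕ, ENNReal.ofReal (killedStep p n a b)


/-! Fix `b`, let `g_N(x) = ∑_{n<N} q_n(x, b)` and `M_N = g_N(b)`, which increases with `N`. Off `b`,
the first-step decomposition `g_{N+1}(x) = ∑_e p_e 1_{x+e ∈ Q} g_N(x+e)` and the superharmonicity
of the nonnegative `f` give, by induction on `N`, `f(b) g_N(x) ≤ f(x) M_N` on the quadrant (an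
equality at `x = b`). Letting `N → ∞` in `[0, ∞]` gives the inequality. -/

theorem Fin.sum_Iic_zero {M : Type*} [AddCommMonoid M] {n : ℕ} (f : Fin (n + 1) → M) :
    ∑ l ∈ Iic 0, f l = f 0 := by
  rw [← bot_eq_zero, Iic_bot, sum_singleton]

theorem Fin.sum_Iic_succ_cons {α M : Type*} [AddCommMonoid M] {n : ℕ} (φ : α → M) (x : α)
    (v : Fin n → α) (k : Fin n) :
    ∑ l ∈ Iic k.succ, φ ((Fin.cons x v : Fin (n + 1) → α) l) = φ x + ∑ l ∈ Iic k, φ (v l) := by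
  simp only [← filter_ge_eq_Iic, sum_filter, Fin.sum_univ_succ, Fin.cons_zero, Fin.cons_succ,
    Fin.succ_le_succ_iff, Fin.zero_le, if_true]

theorem ofReal_mul_tsum_le_of_sum_range_le {u v : ℕ → ℝ} {c d : ℝ} (hu : ∀ n, 0 ≤ u n)
    (hv : ∀ n, 0 ≤ v n) (h : ∀ N, c * ∑ n ∈ range N, u n ≤ d * ∑ n ∈ range N, v n) :
    ENNReal.ofReal c * ∑' n, ENNReal.ofReal (u n) ≤
      ENNReal.ofReal d * ∑' n, ENNReal.ofReal (v n) := by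
  have ofReal_mul_sum : ∀ (w : ℕ → ℝ), (∀ n, 0 ≤ w n) → ∀ r N,
      ENNReal.ofReal (r * ∑ n ∈ range N, w n) =
        ENNReal.ofReal r * ∑ n ∈ range N, ENNReal.ofReal (w n) := fun w hw r N => by
    rw [ENNReal.ofReal_mul' (sum_nonneg fun n _ => hw n),
      ENNReal.ofReal_sum_of_nonneg fun n _ => hw n]
  rw [ENNReal.tsum_eq_iSup_nat, ENNReal.mul_iSup]
  refine iSup_le fun N => ?_
  calc ENNReal.ofReal c * ∑ n ∈ range N, ENNReal.ofReal (u n)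
      = ENNReal.ofReal (c * ∑ n ∈ range N, u n) := (ofReal_mul_sum u hu c N).symm
    _ ≤ ENNReal.ofReal (d * ∑ n ∈ range N, v n) := ENNReal.ofReal_le_ofReal (h N)
    _ = ENNReal.ofReal d * ∑ n ∈ range N, ENNReal.ofReal (v n) := ofReal_mul_sum v hv d N
    _ ≤ ENNReal.ofReal d * ∑' n, ENNReal.ofReal (v n) := by
      gcongr
      exact ENNReal.sum_le_tsum _

def quadrant : Set (ℤ × ℤ) := {x | 1 ≤ x.1 ∧ 1 ≤ x.2}

noncomputable abbrev smallSteps : Finset (ℤ × ℤ) := Icc (-1, -1) (1, 1)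

theorem sum_smallSteps {M : Type*} [AddCommMonoid M] (F : ℤ × ℤ → M) :
    ∑ e ∈ smallSteps, F e = ∑ i ∈ Icc (-1 : ℤ) 1, ∑ j ∈ Icc (-1 : ℤ) 1, F (i, j) := by
  rw [smallSteps, Icc_prod_def, sum_product]

theorem nonneg_of_mem_quadrant_add {a e : ℤ × ℤ} (ha : a ∈ quadrant) (he : e ∈ smallSteps) :
    0 ≤ (a + e).1 ∧ 0 ≤ (a + e).2 := by
  obtain ⟨⟨he₁, he₂⟩, -⟩ := mem_Icc.1 he
  exact ⟨by linarith [ha.1, show (-1 : ℤ) ≤ e.1 from he₁, Prod.fst_add a e],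
    by linarith [ha.2, show (-1 : ℤ) ≤ e.2 from he₂, Prod.snd_add a e]⟩

theorem killedStep_nonneg {p : ℤ → ℤ → ℝ} (hp : ∀ i j, 0 ≤ p i j) (n : ℕ) (a b : ℤ × ℤ) :
    0 ≤ killedStep p n a b :=
  sum_nonneg fun _ _ => by
    split_ifs
    exacts [prod_nonneg fun _ _ => hp _ _, le_rfl]

theorem killedStep_zero (p : ℤ → ℤ → ℝ) (a b : ℤ × ℤ) :
    killedStep p 0 a b = if a = b then 1 else 0 := by
  simp [killedStep]

theorem killedStep_succ (p : ℤ → ℤ → ℝ) (n : ℕ) (a b : ℤ × ℤ) :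
    killedStep p (n + 1) a b =
      ∑ e ∈ smallSteps, p e.1 e.2 * quadrant.indicator (killedStep p n · b) (a + e) := by
  rw [killedStep, ← (Fin.consEquiv fun _ => smallSteps).sum_comp, Fintype.sum_prod_type,
    ← sum_coe_sort smallSteps]
  refine sum_congr rfl fun x _ => ?_
  by_cases hx : a + x ∈ quadrant
  · rw [Set.indicator_of_mem hx, killedStep, mul_sum]
    refine sum_congr rfl fun g _ => ?_
    simp only [Fin.consEquiv_apply, Fin.forall_fin_succ, Fin.sum_Iic_zero, Fin.sum_Iic_succ_cons,
      Fin.sum_univ_succ, Fin.prod_univ_succ, Fin.cons_zero, Fin.cons_succ, ← add_assoc, hx.1, hx.2,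
      true_and, mul_ite, mul_zero]
  · rw [Set.indicator_of_notMem hx, mul_zero]
    refine sum_eq_zero fun g _ => if_neg fun h => hx ?_
    have h0 := h.1 0
    rwa [Fin.sum_Iic_zero, Fin.consEquiv_apply, Fin.cons_zero] at h0

theorem sum_range_succ_killedStep_of_ne (p : ℤ → ℤ → ℝ) {a b : ℤ × ℤ} (hab : a ≠ b) (N : ℕ) :
    ∑ n ∈ range (N + 1), killedStep p n a b =
      ∑ e ∈ smallSteps, p e.1 e.2 *
        quadrant.indicator (fun x => ∑ n ∈ range N, killedStep p n x b) (a + e) := by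
  rw [sum_range_succ', killedStep_zero, if_neg hab, add_zero]
  simp only [killedStep_succ]
  rw [sum_comm]
  refine sum_congr rfl fun e _ => ?_
  rw [← mul_sum]
  by_cases he : a + e ∈ quadrant
  · simp only [Set.indicator_of_mem he]
  · simp only [Set.indicator_of_notMem he, sum_const_zero]

theorem mul_sum_killedStep_le {p : ℤ → ℤ → ℝ} (hp : ∀ i j, 0 ≤ p i j) {f : ℤ → ℤ → ℝ}
    (hf_nonneg : ∀ i j, 0 ≤ i → 0 ≤ j → 0 ≤ f i j)
    (hf_super : ∀ x ∈ quadrant, ∑ e ∈ smallSteps, p e.1 e.2 * f (x + e).1 (x + e).2 ≤ f x.1 x.2)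
    (b : ℤ × ℤ) (N : ℕ) {a : ℤ × ℤ} (ha : a ∈ quadrant) :
    f b.1 b.2 * ∑ n ∈ range N, killedStep p n a b ≤
      f a.1 a.2 * ∑ n ∈ range N, killedStep p n b b := by
  induction N generalizing a with
  | zero => simp
  | succ N ih =>
    obtain rfl | hab := eq_or_ne a b
    · rfl
    have hM : 0 ≤ ∑ n ∈ range N, killedStep p n b b :=
      sum_nonneg fun n _ => killedStep_nonneg hp n b b
    have hfa : 0 ≤ f a.1 a.2 := hf_nonneg _ _ (by linarith [ha.1]) (by linarith [ha.2])
    have hstep : ∀ e ∈ smallSteps,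
        f b.1 b.2 * quadrant.indicator (fun x => ∑ n ∈ range N, killedStep p n x b) (a + e) ≤
          f (a + e).1 (a + e).2 * ∑ n ∈ range N, killedStep p n b b := by
      intro e he
      by_cases hae : a + e ∈ quadrant
      · rw [Set.indicator_of_mem hae]
        exact ih hae
      · rw [Set.indicator_of_notMem hae, mul_zero]
        have := nonneg_of_mem_quadrant_add ha he
        exact mul_nonneg (hf_nonneg _ _ this.1 this.2) hM
    calc f b.1 b.2 * ∑ n ∈ range (N + 1), killedStep p n a b
        = ∑ e ∈ smallSteps, p e.1 e.2 *
            (f b.1 b.2 *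
              quadrant.indicator (fun x => ∑ n ∈ range N, killedStep p n x b) (a + e)) := by
          rw [sum_range_succ_killedStep_of_ne p hab, mul_sum]
          exact sum_congr rfl fun e _ => mul_left_comm _ _ _
      _ ≤ ∑ e ∈ smallSteps, p e.1 e.2 *
            (f (a + e).1 (a + e).2 * ∑ n ∈ range N, killedStep p n b b) :=
          sum_le_sum fun e he => mul_le_mul_of_nonneg_left (hstep e he) (hp _ _)
      _ = (∑ e ∈ smallSteps, p e.1 e.2 * f (a + e).1 (a + e).2) *
            ∑ n ∈ range N, killedStep p n b b := by
          simp only [sum_mul, mul_assoc]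
      _ ≤ f a.1 a.2 * ∑ n ∈ range N, killedStep p n b b :=
          mul_le_mul_of_nonneg_right (hf_super a ha) hM
      _ ≤ f a.1 a.2 * ∑ n ∈ range (N + 1), killedStep p n b b := by
          rw [sum_range_succ]
          exact mul_le_mul_of_nonneg_left (le_add_of_nonneg_right (killedStep_nonneg hp N b b)) hfa

theorem harnack_inequality_general (p : ℤ → ℤ → ℝ)
    -- (H1)
    (hp_nonneg : ∀ i j : ℤ, 0 ≤ p i j)
    (f : ℤ → ℤ → ℝ)
    (hf_nonneg : ∀ i0 j0 : ℤ, 0 ≤ i0 → 0 ≤ j0 → 0 ≤ f i0 j0)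
    -- (P1)
    (hP1 : ∀ i0 j0 : ℤ, 1 ≤ i0 → 1 ≤ j0 →
      f i0 j0 = ∑ i ∈ Finset.Icc (-1 : ℤ) 1, ∑ j ∈ Finset.Icc (-1 : ℤ) 1,
        p i j * f (i0 + i) (j0 + j))
    (a b : ℤ × ℤ) (ha : 1 ≤ a.1 ∧ 1 ≤ a.2) :
    ENNReal.ofReal (f b.1 b.2) * greenFn p a b ≤ ENNReal.ofReal (f a.1 a.2) * greenFn p b b :=
  ofReal_mul_tsum_le_of_sum_range_le (killedStep_nonneg hp_nonneg · a b)
    (killedStep_nonneg hp_nonneg · b b) fun N =>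
      mul_sum_killedStep_le hp_nonneg hf_nonneg
        (fun x hx => (sum_smallSteps _).trans_le (hP1 x.1 x.2 hx.1 hx.2).ge) b N ha

theorem harnack_inequality (p : ℤ → ℤ → ℝ)
    -- (H1)
    (hp_nonneg : ∀ i j : ℤ, 0 ≤ p i j) (hp00 : p 0 0 = 0)
    (hp_sum : ∑ i ∈ Finset.Icc (-1 : ℤ) 1, ∑ j ∈ Finset.Icc (-1 : ℤ) 1, p i j = 1)
    (f : ℤ → ℤ → ℝ)
    (hf_nonneg : ∀ i0 j0 : ℤ, 0 ≤ i0 → 0 ≤ j0 → 0 ≤ f i0 j0)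
    -- (P1)
    (hP1 : ∀ i0 j0 : ℤ, 1 ≤ i0 → 1 ≤ j0 →
      f i0 j0 = ∑ i ∈ Finset.Icc (-1 : ℤ) 1, ∑ j ∈ Finset.Icc (-1 : ℤ) 1,
        p i j * f (i0 + i) (j0 + j))
    -- (P2)
    (hP2 : ∀ i0 j0 : ℤ, 0 ≤ i0 → 0 ≤ j0 → i0 * j0 = 0 → f i0 j0 = 0)
    (a b : ℤ × ℤ) (ha : 1 ≤ a.1 ∧ 1 ≤ a.2) (hb : 1 ≤ b.1 ∧ 1 ≤ b.2) :
    ENNReal.ofReal (f b.1 b.2) * greenFn p a b ≤ ENNReal.ofReal (f a.1 a.2) * greenFn p b b :=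
  harnack_inequality_general p hp_nonneg f hf_nonneg hP1 a b ha
end

section
/- Let the walk satisfy (H1), (H2) and (H3). Then the diagonal Green functions along the horizontal boundary row are uniformly bounded: there exists a finite constant M such that G((i,1),(i,1)) ≤ M for every integer i ≥ 1. -/
open Finset
open scoped ENNReal

/-- The cyclic list `p_{1,1}, p_{1,0}, p_{1,-1}, p_{0,-1}, p_{-1,-1}, p_{-1,0}, p_{-1,1},
p_{0,1}` of the eight jump probabilities, indexed by `Fin 8`. -/
def cyclicList (p : ℤ → ℤ → ℝ) : Fin 8 → ℝ :=
  ![p 1 1, p 1 0, p 1 (-1), p 0 (-1), p (-1) (-1), p (-1) 0, p (-1) 1, p 0 1]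

/-!
Hypothesis (H2) provides a step `x₀` with vertical component `-1` and probability `c > 0`;
from any site `b = (i, 1)` of the bottom row it kills the walk. Hence every visit to `b` is
followed by death with probability at least `c`: if `S n` is the probability that the walk
started at `a` survives `n` steps, then `S (n + 1) + c · q_n(a, b) ≤ S n`, so that
`c · ∑ₙ q_n(a, b) ≤ S 0 = 1` and `G(b, b) ≤ 1 / c` uniformly in `i`.
-/

theorem Fin.sum_pi_snoc {α M : Type*} [Fintype α] [AddCommMonoid M] {n : ℕ}
    (F : (Fin (n + 1) → α) → M) :
    ∑ e, F e = ∑ g : Fin n → α, ∑ x, F (Fin.snoc g x) := by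
  rw [← (Fin.snocEquiv fun _ => α).sum_comp, Fintype.sum_prod_type, Finset.sum_comm]
  rfl

theorem Finset.sum_filter_add_le_sum {ι M : Type*} [DecidableEq ι] [AddCommMonoid M]
    [PartialOrder M] [IsOrderedAddMonoid M] {s : Finset ι} {f : ι → M} (hf : ∀ x ∈ s, 0 ≤ f x)
    (P : ι → Prop) [DecidablePred P] {x₀ : ι} (hx₀ : x₀ ∈ s) (hPx₀ : ¬ P x₀) :
    ∑ x ∈ s with P x, f x + f x₀ ≤ ∑ x ∈ s, f x := by
  rw [← Finset.sum_erase_add s f hx₀]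
  refine add_le_add_left (Finset.sum_le_sum_of_subset_of_nonneg (fun x hx => ?_)
    fun x hx _ => hf x ?_) _
  · rw [Finset.mem_filter] at hx
    exact Finset.mem_erase.mpr ⟨fun h => hPx₀ (h ▸ hx.2), hx.1⟩
  · exact Finset.mem_of_mem_erase hx

namespace QuarterPlaneWalk

abbrev Step : Type := Finset.Icc ((-1, -1) : ℤ × ℤ) (1, 1)

abbrev InQuadrant (z : ℤ × ℤ) : Prop := 1 ≤ z.1 ∧ 1 ≤ z.2

abbrev StaysInQuadrant (a : ℤ × ℤ) {n : ℕ} (e : Fin n → Step) : Prop :=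
  ∀ k : Fin n, InQuadrant (a + ∑ l ∈ Iic k, (e l : ℤ × ℤ))

variable (p : ℤ → ℤ → ℝ)

abbrev pathWeight {n : ℕ} (e : Fin n → Step) : ℝ :=
  ∏ k, p (e k : ℤ × ℤ).1 (e k : ℤ × ℤ).2

noncomputable def survivalProb (a : ℤ × ℤ) (n : ℕ) : ℝ :=
  ∑ e : Fin n → Step, if StaysInQuadrant a e then pathWeight p e else 0

theorem killedStep_eq (n : ℕ) (a b : ℤ × ℤ) :
    killedStep p n a b = ∑ e : Fin n → Step,
      if StaysInQuadrant a e ∧ a + ∑ l, (e l : ℤ × ℤ) = b then pathWeight p e else 0 :=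
  rfl

theorem sum_step (f : ℤ → ℤ → ℝ) :
    ∑ x : Step, f (x : ℤ × ℤ).1 (x : ℤ × ℤ).2 =
      ∑ i ∈ Icc (-1 : ℤ) 1, ∑ j ∈ Icc (-1 : ℤ) 1, f i j := by
  rw [Finset.sum_coe_sort (f := fun x : ℤ × ℤ => f x.1 x.2), Finset.Icc_prod_def,
    Finset.sum_product]

theorem staysInQuadrant_snoc (a : ℤ × ℤ) {n : ℕ} (g : Fin n → Step) (x : Step) :
    StaysInQuadrant a (Fin.snoc g x : Fin (n + 1) → Step) ↔
      StaysInQuadrant a g ∧ InQuadrant (a + ∑ l, (g l : ℤ × ℤ) + (x : ℤ × ℤ)) := by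
  have hlast : Iic (Fin.last n) = univ := by ext; simp [Fin.le_last]
  simp only [StaysInQuadrant, Fin.forall_fin_succ', Fin.sum_Iic_castSucc, Fin.snoc_castSucc,
    hlast, Fin.sum_univ_castSucc, Fin.snoc_last, add_assoc]

theorem pathWeight_snoc {n : ℕ} (g : Fin n → Step) (x : Step) :
    pathWeight p (Fin.snoc g x : Fin (n + 1) → Step) =
      pathWeight p g * p (x : ℤ × ℤ).1 (x : ℤ × ℤ).2 := by
  simp only [pathWeight, Fin.prod_univ_castSucc, Fin.snoc_castSucc, Fin.snoc_last]

theorem survivalProb_succ (a : ℤ × ℤ) (n : ℕ) :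
    survivalProb p a (n + 1) = ∑ g : Fin n → Step, if StaysInQuadrant a g then
      pathWeight p g * ∑ x ∈ {x : Step | InQuadrant (a + ∑ l, (g l : ℤ × ℤ) + x)},
        p (x : ℤ × ℤ).1 (x : ℤ × ℤ).2
      else 0 := by
  rw [survivalProb, Fin.sum_pi_snoc]
  refine Finset.sum_congr rfl fun g _ => ?_
  simp only [staysInQuadrant_snoc, pathWeight_snoc, Finset.sum_filter, Finset.mul_sum, ite_and]
  split_ifs <;> simp [mul_ite]

variable {p}

theorem pathWeight_nonneg (hp : ∀ i j, 0 ≤ p i j) {n : ℕ} (e : Fin n → Step) :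
    0 ≤ pathWeight p e :=
  Finset.prod_nonneg fun _ _ => hp _ _

theorem survivalProb_nonneg (hp : ∀ i j, 0 ≤ p i j) (a : ℤ × ℤ) (n : ℕ) :
    0 ≤ survivalProb p a n :=
  Finset.sum_nonneg fun e _ => by split_ifs <;> simp [pathWeight_nonneg hp]

theorem killedStep_nonneg (hp : ∀ i j, 0 ≤ p i j) (n : ℕ) (a b : ℤ × ℤ) :
    0 ≤ killedStep p n a b :=
  Finset.sum_nonneg fun e _ => by split_ifs <;> simp [pathWeight_nonneg hp]

theorem exists_step_down (hp : ∀ i j, 0 ≤ p i j)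
    (h : ¬ (p 1 (-1) = 0 ∧ p 0 (-1) = 0 ∧ p (-1) (-1) = 0)) :
    ∃ x₀ : Step, (x₀ : ℤ × ℤ).2 = -1 ∧ 0 < p (x₀ : ℤ × ℤ).1 (x₀ : ℤ × ℤ).2 := by
  by_contra! hnone
  exact h ⟨(hnone ⟨(1, -1), by decide⟩ rfl).antisymm (hp _ _),
    (hnone ⟨(0, -1), by decide⟩ rfl).antisymm (hp _ _),
    (hnone ⟨(-1, -1), by decide⟩ rfl).antisymm (hp _ _)⟩

variable (hp : ∀ i j, 0 ≤ p i j) (hsum : ∑ x : Step, p (x : ℤ × ℤ).1 (x : ℤ × ℤ).2 = 1)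
  {a b : ℤ × ℤ} {x₀ : Step} (hb : ¬ InQuadrant (b + x₀))
include hp hsum hb

theorem survivalProb_succ_add_le (n : ℕ) :
    survivalProb p a (n + 1) + p (x₀ : ℤ × ℤ).1 (x₀ : ℤ × ℤ).2 * killedStep p n a b ≤
      survivalProb p a n := by
  rw [survivalProb_succ, killedStep_eq, Finset.mul_sum, ← Finset.sum_add_distrib, survivalProb]
  refine Finset.sum_le_sum fun g _ => ?_
  by_cases hg : StaysInQuadrant a g
  swap
  · simp [hg]
  have hw := pathWeight_nonneg hp g
  set S := ∑ x ∈ {x : Step | InQuadrant (a + ∑ l, (g l : ℤ × ℤ) + x)},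
    p (x : ℤ × ℤ).1 (x : ℤ × ℤ).2
  have hpx : ∀ x ∈ (univ : Finset Step), 0 ≤ p (x : ℤ × ℤ).1 (x : ℤ × ℤ).2 := fun _ _ => hp _ _
  by_cases hend : a + ∑ l, (g l : ℤ × ℤ) = b
  · have hS : S + p (x₀ : ℤ × ℤ).1 (x₀ : ℤ × ℤ).2 ≤ 1 :=
      hsum ▸ Finset.sum_filter_add_le_sum hpx _ (mem_univ x₀) (hend ▸ hb)
    simp only [if_pos hg, if_pos (And.intro hg hend)]
    nlinarith
  · have hS : S ≤ 1 := hsum ▸ Finset.sum_le_sum_of_subset_of_nonneg (filter_subset _ _)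
      fun x hx _ => hpx x hx
    simp only [if_pos hg, hend, and_false, if_false, mul_zero, add_zero]
    nlinarith

theorem mul_sum_killedStep_le_one (N : ℕ) :
    p (x₀ : ℤ × ℤ).1 (x₀ : ℤ × ℤ).2 * ∑ n ∈ range N, killedStep p n a b ≤ 1 := by
  suffices h : survivalProb p a N +
      p (x₀ : ℤ × ℤ).1 (x₀ : ℤ × ℤ).2 * ∑ n ∈ range N, killedStep p n a b ≤ 1 by
    linarith [survivalProb_nonneg hp a N]
  induction N with
  | zero => simp [survivalProb, pathWeight]
  | succ N ih =>
    rw [Finset.sum_range_succ, mul_add]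
    linarith [survivalProb_succ_add_le hp hsum hb (a := a) N]

theorem greenFn_le :
    greenFn p a b ≤ (ENNReal.ofReal (p (x₀ : ℤ × ℤ).1 (x₀ : ℤ × ℤ).2))⁻¹ := by
  refine ENNReal.tsum_le_of_sum_range_le fun N => ENNReal.le_inv_iff_mul_le.mpr ?_
  rw [← ENNReal.ofReal_sum_of_nonneg fun n _ => killedStep_nonneg hp n a b,
    ← ENNReal.ofReal_mul (Finset.sum_nonneg fun n _ => killedStep_nonneg hp n a b),
    ← ENNReal.ofReal_one, mul_comm]
  exact ENNReal.ofReal_le_ofReal (mul_sum_killedStep_le_one hp hsum hb N)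

end QuarterPlaneWalk

theorem diagonal_green_functions_bounded_general (p : ℤ → ℤ → ℝ)
    -- (H1)
    (hp_nonneg : ∀ i j : ℤ, 0 ≤ p i j)
    (hp_sum : ∑ i ∈ Finset.Icc (-1 : ℤ) 1, ∑ j ∈ Finset.Icc (-1 : ℤ) 1, p i j = 1)
    -- (H2)
    (hH2 : ∀ k : Fin 8, ¬ (cyclicList p k = 0 ∧ cyclicList p (k + 1) = 0 ∧
      cyclicList p (k + 2) = 0)) :
    ∃ M : ℝ≥0∞, M < ⊤ ∧ ∀ i : ℤ, 1 ≤ i → greenFn p (i, 1) (i, 1) ≤ M := by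
  -- entries 2, 3, 4 of `cyclicList p` are the three jumps with vertical component `-1`
  obtain ⟨x₀, hx₀, hpos⟩ := QuarterPlaneWalk.exists_step_down hp_nonneg (hH2 2)
  refine ⟨_, ENNReal.inv_lt_top.mpr (ENNReal.ofReal_pos.mpr hpos), fun i _ => ?_⟩
  refine QuarterPlaneWalk.greenFn_le hp_nonneg ((QuarterPlaneWalk.sum_step p).trans hp_sum) ?_
  simp [hx₀]

theorem diagonal_green_functions_bounded (p : ℤ → ℤ → ℝ)
    -- (H1)
    (hp_nonneg : ∀ i j : ℤ, 0 ≤ p i j) (hp00 : p 0 0 = 0)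
    (hp_sum : ∑ i ∈ Finset.Icc (-1 : ℤ) 1, ∑ j ∈ Finset.Icc (-1 : ℤ) 1, p i j = 1)
    -- (H2)
    (hH2 : ∀ k : Fin 8, ¬ (cyclicList p k = 0 ∧ cyclicList p (k + 1) = 0 ∧
      cyclicList p (k + 2) = 0))
    -- (H3)
    (hH3x : ∑ i ∈ Finset.Icc (-1 : ℤ) 1, ∑ j ∈ Finset.Icc (-1 : ℤ) 1, (i : ℝ) * p i j = 0)
    (hH3y : ∑ i ∈ Finset.Icc (-1 : ℤ) 1, ∑ j ∈ Finset.Icc (-1 : ℤ) 1, (j : ℝ) * p i j = 0) :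
    ∃ M : ℝ≥0∞, M < ⊤ ∧ ∀ i : ℤ, 1 ≤ i → greenFn p (i, 1) (i, 1) ≤ M :=
  diagonal_green_functions_bounded_general p hp_nonneg hp_sum hH2
end

section
/- Let U ⊆ C be a bounded, open, connected set which is symmetric under complex conjugation (z ∈ U if and only if z̄ ∈ U). Let h : C → C be continuous on the closure of U, complex-differentiable (holomorphic) on U, and satisfy h(z) = h(z̄) for every z on the boundary (frontier) of U. Then h is constant on the closure of U. -/
/-!
With `φ z = conj (h (conj z))`, holomorphic on `U` by symmetry of `U`, the boundary condition says
`φ = conj h` on the frontier. Hence `h - φ` and `I * (h + φ)` are holomorphic functions with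
vanishing real part on the frontier. By the maximum modulus principle applied to `exp (± F)` the
real part of such an `F` vanishes on the whole closure, and by the open mapping theorem `F` is then
constant. Solving for `h` gives `h = ((h - φ) - I * (I * (h + φ))) / 2`.
-/

open Complex ComplexConjugate

theorem Complex.closure_preimage_conj (s : Set ℂ) : closure (conj ⁻¹' s) = conj ⁻¹' closure s :=
  (conjCLE.toHomeomorph.preimage_closure s).symm

theorem Complex.frontier_preimage_conj (s : Set ℂ) :
    frontier (conj ⁻¹' s) = conj ⁻¹' frontier s :=
  (conjCLE.toHomeomorph.preimage_frontier s).symm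

namespace DiffContOnCl

variable {U : Set ℂ} {f : ℂ → ℂ}

theorem re_le_of_forall_mem_frontier_re_le (hU : Bornology.IsBounded U) (hf : DiffContOnCl ℂ f U)
    {C : ℝ} (hC : ∀ z ∈ frontier U, (f z).re ≤ C) {z : ℂ} (hz : z ∈ closure U) :
    (f z).re ≤ C := by
  have hexp : ‖exp (f z)‖ ≤ Real.exp C :=
    norm_le_of_forall_mem_frontier_norm_le hU (differentiable_exp.comp_diffContOnCl hf)
      (fun w hw => by simpa [norm_exp] using hC w hw) hz
  rwa [norm_exp, Real.exp_le_exp] at hexp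

theorem re_eq_zero_of_forall_mem_frontier_re_eq_zero (hU : Bornology.IsBounded U)
    (hf : DiffContOnCl ℂ f U) (hb : ∀ z ∈ frontier U, (f z).re = 0) {z : ℂ}
    (hz : z ∈ closure U) : (f z).re = 0 := by
  have hle := hf.re_le_of_forall_mem_frontier_re_le hU (fun w hw => (hb w hw).le) hz
  have hge := hf.neg.re_le_of_forall_mem_frontier_re_le hU (C := 0)
    (fun w hw => by simp [hb w hw]) hz
  simp only [Pi.neg_apply, neg_re, neg_nonpos] at hge
  exact le_antisymm hle hge

theorem conj_conj (hU : IsOpen U) (hf : DiffContOnCl ℂ f U) :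
    DiffContOnCl ℂ (conj ∘ f ∘ conj) (conj ⁻¹' U) := by
  refine ⟨fun z hz => ?_, ?_⟩
  · exact (differentiableAt_conj_conj_iff.2 (hf.differentiableAt hU hz)).differentiableWithinAt
  · rw [closure_preimage_conj]
    exact continuous_conj.comp_continuousOn
      (hf.continuousOn.comp continuous_conj.continuousOn fun _ hz => hz)

end DiffContOnCl

theorem AnalyticOnNhd.exists_eq_const_of_re_eq_zero {U : Set ℂ} {f : ℂ → ℂ}
    (hf : AnalyticOnNhd ℂ f U) (hU_open : IsOpen U) (hU_conn : IsPreconnected U)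
    (hre : ∀ z ∈ U, (f z).re = 0) : ∃ c, ∀ z ∈ U, f z = c := by
  rcases hf.is_constant_or_isOpen hU_conn with hconst | hopen
  · exact hconst
  · have himage : f '' U ⊆ interior (re ⁻¹' {0}) :=
      interior_maximal (Set.image_subset_iff.2 hre) (hopen U subset_rfl hU_open)
    rw [interior_preimage_re, interior_singleton, Set.preimage_empty] at himage
    exact ⟨0, fun z hz => (himage ⟨z, hz, rfl⟩).elim⟩

theorem DiffContOnCl.exists_eq_const_of_forall_mem_frontier_re_eq_zero {U : Set ℂ} {f : ℂ → ℂ}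
    (hU_bounded : Bornology.IsBounded U) (hU_open : IsOpen U) (hU_conn : IsPreconnected U)
    (hf : DiffContOnCl ℂ f U) (hb : ∀ z ∈ frontier U, (f z).re = 0) :
    ∃ c, ∀ z ∈ closure U, f z = c := by
  obtain ⟨c, hc⟩ := (hf.differentiableOn.analyticOnNhd hU_open).exists_eq_const_of_re_eq_zero
    hU_open hU_conn fun z hz =>
      hf.re_eq_zero_of_forall_mem_frontier_re_eq_zero hU_bounded hb (subset_closure hz)
  exact ⟨c, Set.EqOn.of_subset_closure hc hf.continuousOn continuousOn_const subset_closure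
    subset_rfl⟩

theorem constant_from_conjugation_boundary_condition (U : Set ℂ)
    (hU_bounded : Bornology.IsBounded U) (hU_open : IsOpen U) (hU_conn : IsConnected U)
    (hU_sym : ∀ z : ℂ, z ∈ U ↔ (starRingEnd ℂ) z ∈ U)
    (h : ℂ → ℂ)
    (h_cont : ContinuousOn h (closure U))
    (h_diff : DifferentiableOn ℂ h U)
    (h_bdry : ∀ z ∈ frontier U, h z = h ((starRingEnd ℂ) z)) :
    ∃ c : ℂ, ∀ z ∈ closure U, h z = c := by
  have hU_conj : conj ⁻¹' U = U := Set.ext fun z => (hU_sym z).symm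
  have hh : DiffContOnCl ℂ h U := ⟨h_diff, h_cont⟩
  set φ := conj ∘ h ∘ conj
  have hφ : DiffContOnCl ℂ φ U := hU_conj ▸ hh.conj_conj hU_open
  have hφ_bdry : ∀ z ∈ frontier U, φ z = conj (h z) := fun z hz => by
    have hz' : conj z ∈ frontier U := by
      rwa [← hU_conj, frontier_preimage_conj] at hz
    simp [φ, h_bdry _ hz']
  obtain ⟨c₁, hc₁⟩ := (hh.sub hφ).exists_eq_const_of_forall_mem_frontier_re_eq_zero hU_bounded
    hU_open hU_conn.isPreconnected fun z hz => by simp [hφ_bdry z hz]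
  obtain ⟨c₂, hc₂⟩ := ((hh.add hφ).const_smul I).exists_eq_const_of_forall_mem_frontier_re_eq_zero
    hU_bounded hU_open hU_conn.isPreconnected fun z hz => by simp [hφ_bdry z hz]
  refine ⟨(c₁ - I * c₂) / 2, fun z hz => ?_⟩
  rw [← hc₁ z hz, ← hc₂ z hz]
  simp only [Pi.sub_apply, Pi.smul_apply, Pi.add_apply, smul_eq_mul]
  linear_combination (h z + φ z) / 2 * I_sq
end

section
/- Let the walk satisfy (H1) and (H2). Then the strict Cauchy–Schwarz inequality (Σ_{-1≤i,j≤1} i·j·p_{i,j})² < (Σ_{-1≤i,j≤1} i²·p_{i,j})·(Σ_{-1≤i,j≤1} j²·p_{i,j}) holds, and both factors on the right-hand side are strictly positive; consequently the angle θ = arccos( −(Σ i·j·p_{i,j}) / sqrt( (Σ i²·p_{i,j})·(Σ j²·p_{i,j}) ) ) is well defined and lies in the open interval (0, π). -/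
/-!
Writing `X = Σ i² p_{ij}`, `Y = Σ j² p_{ij}`, `M = Σ ij p_{ij}`, Lagrange's identity gives
`XY - M² = ½ Σ_{s,t} p_s p_t det(s, t)²`, so the inequality is strict as soon as two steps of
positive probability are not collinear. By (H2) some step `k` among the first three of the cyclic
list has positive probability, and then so does some step among `k + 1, k + 2, k + 3`, which makes
an angle of 45°, 90° or 135° with step `k`.
Strict Cauchy–Schwarz then makes `-M / √(XY)` lie in `(-1, 1)`.
-/

open Finset

/-- The angle `θ = arccos( -Σ i·j·p_{i,j} / sqrt( (Σ i²·p_{i,j})·(Σ j²·p_{i,j}) ) )`. -/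
noncomputable def walkAngle (p : ℤ → ℤ → ℝ) : ℝ :=
  Real.arccos
    (-(∑ i ∈ Finset.Icc (-1 : ℤ) 1, ∑ j ∈ Finset.Icc (-1 : ℤ) 1, (i : ℝ) * (j : ℝ) * p i j) /
      Real.sqrt
        ((∑ i ∈ Finset.Icc (-1 : ℤ) 1, ∑ j ∈ Finset.Icc (-1 : ℤ) 1, (i : ℝ) ^ 2 * p i j) *
          (∑ i ∈ Finset.Icc (-1 : ℤ) 1, ∑ j ∈ Finset.Icc (-1 : ℤ) 1, (j : ℝ) ^ 2 * p i j)))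

theorem sum_mul_sum_sub_sq_eq {ι : Type*} (s : Finset ι) (w x y : ι → ℝ) :
    (∑ i ∈ s, x i ^ 2 * w i) * (∑ i ∈ s, y i ^ 2 * w i) - (∑ i ∈ s, x i * y i * w i) ^ 2 =
      (∑ i ∈ s, ∑ j ∈ s, w i * w j * (x i * y j - x j * y i) ^ 2) / 2 := by
  have expand : ∀ i j, w i * w j * (x i * y j - x j * y i) ^ 2 =
      x i ^ 2 * w i * (y j ^ 2 * w j) + x j ^ 2 * w j * (y i ^ 2 * w i)
        - 2 * (x i * y i * w i * (x j * y j * w j)) := fun i j => by ring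
  simp only [expand, sum_sub_distrib, sum_add_distrib, ← mul_sum, ← sum_mul]
  ring

theorem sq_sum_mul_lt_sum_mul_sum {ι : Type*} {s : Finset ι} {w x y : ι → ℝ}
    (hw : ∀ i ∈ s, 0 ≤ w i) {a b : ι} (ha : a ∈ s) (hb : b ∈ s) (hwa : 0 < w a)
    (hwb : 0 < w b) (hab : x a * y b ≠ x b * y a) :
    (∑ i ∈ s, x i * y i * w i) ^ 2 < (∑ i ∈ s, x i ^ 2 * w i) * (∑ i ∈ s, y i ^ 2 * w i) := by
  have hterm : ∀ i ∈ s, ∀ j ∈ s, 0 ≤ w i * w j * (x i * y j - x j * y i) ^ 2 :=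
    fun i hi j hj => by have := hw i hi; have := hw j hj; positivity
  have hab_pos : 0 < w a * w b * (x a * y b - x b * y a) ^ 2 := by
    have := sub_ne_zero.2 hab; positivity
  have : 0 < ∑ i ∈ s, ∑ j ∈ s, w i * w j * (x i * y j - x j * y i) ^ 2 :=
    calc 0 < w a * w b * (x a * y b - x b * y a) ^ 2 := hab_pos
      _ ≤ ∑ j ∈ s, w a * w j * (x a * y j - x j * y a) ^ 2 :=
        single_le_sum (hterm a ha) hb
      _ ≤ _ := single_le_sum (f := fun i => ∑ j ∈ s, w i * w j * (x i * y j - x j * y i) ^ 2)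
        (fun i hi => sum_nonneg (hterm i hi)) ha
  linarith [sum_mul_sum_sub_sq_eq s w x y]

theorem arccos_neg_div_sqrt_mem_Ioo {m X Y : ℝ} (h : m ^ 2 < X * Y) :
    Real.arccos (-m / Real.sqrt (X * Y)) ∈ Set.Ioo 0 Real.pi := by
  have hXY : 0 < Real.sqrt (X * Y) := Real.sqrt_pos.2 ((sq_nonneg m).trans_lt h)
  have hm : |m| < Real.sqrt (X * Y) := Real.lt_sqrt (abs_nonneg m) |>.2 (by rwa [sq_abs])
  obtain ⟨hlo, hhi⟩ := abs_lt.1 hm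
  refine ⟨Real.arccos_pos.2 ?_, Real.arccos_lt_pi.2 ?_⟩
  · rw [div_lt_one hXY]; linarith
  · rw [lt_div_iff₀ hXY]; linarith

def compassStep : Fin 8 → ℤ × ℤ :=
  ![(1, 1), (1, 0), (1, -1), (0, -1), (-1, -1), (-1, 0), (-1, 1), (0, 1)]

theorem cyclicList_apply (p : ℤ → ℤ → ℝ) (k : Fin 8) :
    cyclicList p k = p (compassStep k).1 (compassStep k).2 := by
  fin_cases k <;> rfl

theorem compassStep_mem (k : Fin 8) : compassStep k ∈ Icc (-1 : ℤ) 1 ×ˢ Icc (-1 : ℤ) 1 := by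
  fin_cases k <;> decide

theorem compassStep_not_collinear (k d : Fin 8) (hd : d.val < 3) :
    (compassStep k).1 * (compassStep (k + 1 + d)).2 ≠
      (compassStep (k + 1 + d)).1 * (compassStep k).2 := by
  revert k d; decide

theorem exists_lt_three_ne_zero_of_not_three_zeros {M : Type*} [Zero M] {f : Fin 8 → M}
    {k : Fin 8} (h : ¬ (f k = 0 ∧ f (k + 1) = 0 ∧ f (k + 2) = 0)) :
    ∃ d : Fin 8, d.val < 3 ∧ f (k + d) ≠ 0 := by
  by_contra! hzero
  exact h ⟨by simpa using hzero 0 (by decide), hzero 1 (by decide), hzero 2 (by decide)⟩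

theorem exists_noncollinear_pair (p : ℤ → ℤ → ℝ)
    (hH2 : ∀ k : Fin 8, ¬ (cyclicList p k = 0 ∧ cyclicList p (k + 1) = 0 ∧
      cyclicList p (k + 2) = 0)) :
    ∃ k l : Fin 8, cyclicList p k ≠ 0 ∧ cyclicList p l ≠ 0 ∧
      (compassStep k).1 * (compassStep l).2 ≠ (compassStep l).1 * (compassStep k).2 := by
  obtain ⟨c, -, hk⟩ := exists_lt_three_ne_zero_of_not_three_zeros (hH2 0)
  obtain ⟨d, hd, hl⟩ := exists_lt_three_ne_zero_of_not_three_zeros (hH2 (0 + c + 1))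
  exact ⟨_, _, hk, hl, compassStep_not_collinear _ d hd⟩

theorem sq_sum_mul_lt_sum_mul_sum_of_cyclicList (p : ℤ → ℤ → ℝ)
    (hp_nonneg : ∀ i j : ℤ, 0 ≤ p i j)
    (hH2 : ∀ k : Fin 8, ¬ (cyclicList p k = 0 ∧ cyclicList p (k + 1) = 0 ∧
      cyclicList p (k + 2) = 0)) :
    (∑ i ∈ Icc (-1 : ℤ) 1, ∑ j ∈ Icc (-1 : ℤ) 1, (i : ℝ) * (j : ℝ) * p i j) ^ 2 <
      (∑ i ∈ Icc (-1 : ℤ) 1, ∑ j ∈ Icc (-1 : ℤ) 1, (i : ℝ) ^ 2 * p i j) *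
        (∑ i ∈ Icc (-1 : ℤ) 1, ∑ j ∈ Icc (-1 : ℤ) 1, (j : ℝ) ^ 2 * p i j) := by
  obtain ⟨k, l, hk, hl, hkl⟩ := exists_noncollinear_pair p hH2
  rw [cyclicList_apply] at hk hl
  simp only [← sum_product']
  refine sq_sum_mul_lt_sum_mul_sum (w := fun z => p z.1 z.2) (fun z _ => hp_nonneg _ _)
    (compassStep_mem k) (compassStep_mem l) ((hp_nonneg _ _).lt_of_ne' hk)
    ((hp_nonneg _ _).lt_of_ne' hl) ?_
  exact_mod_cast hkl

theorem strict_cauchy_schwarz_and_angle_general (p : ℤ → ℤ → ℝ)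
    -- (H1)
    (hp_nonneg : ∀ i j : ℤ, 0 ≤ p i j)
    -- (H2)
    (hH2 : ∀ k : Fin 8, ¬ (cyclicList p k = 0 ∧ cyclicList p (k + 1) = 0 ∧
      cyclicList p (k + 2) = 0)) :
    (∑ i ∈ Finset.Icc (-1 : ℤ) 1, ∑ j ∈ Finset.Icc (-1 : ℤ) 1, (i : ℝ) * (j : ℝ) * p i j) ^ 2 <
        (∑ i ∈ Finset.Icc (-1 : ℤ) 1, ∑ j ∈ Finset.Icc (-1 : ℤ) 1, (i : ℝ) ^ 2 * p i j) *
          (∑ i ∈ Finset.Icc (-1 : ℤ) 1, ∑ j ∈ Finset.Icc (-1 : ℤ) 1, (j : ℝ) ^ 2 * p i j) ∧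
      0 < ∑ i ∈ Finset.Icc (-1 : ℤ) 1, ∑ j ∈ Finset.Icc (-1 : ℤ) 1, (i : ℝ) ^ 2 * p i j ∧
      0 < ∑ i ∈ Finset.Icc (-1 : ℤ) 1, ∑ j ∈ Finset.Icc (-1 : ℤ) 1, (j : ℝ) ^ 2 * p i j ∧
      0 < walkAngle p ∧ walkAngle p < Real.pi := by
  have hCS := sq_sum_mul_lt_sum_mul_sum_of_cyclicList p hp_nonneg hH2
  have hX : 0 ≤ ∑ i ∈ Icc (-1 : ℤ) 1, ∑ j ∈ Icc (-1 : ℤ) 1, (i : ℝ) ^ 2 * p i j :=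
    sum_nonneg fun i _ => sum_nonneg fun j _ => mul_nonneg (sq_nonneg _) (hp_nonneg i j)
  have hY : 0 ≤ ∑ i ∈ Icc (-1 : ℤ) 1, ∑ j ∈ Icc (-1 : ℤ) 1, (j : ℝ) ^ 2 * p i j :=
    sum_nonneg fun i _ => sum_nonneg fun j _ => mul_nonneg (sq_nonneg _) (hp_nonneg i j)
  have hXY := (sq_nonneg _).trans_lt hCS
  exact ⟨hCS, pos_of_mul_pos_left hXY hY, pos_of_mul_pos_right hXY hX,
    arccos_neg_div_sqrt_mem_Ioo hCS⟩

theorem strict_cauchy_schwarz_and_angle (p : ℤ → ℤ → ℝ)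
    -- (H1)
    (hp_nonneg : ∀ i j : ℤ, 0 ≤ p i j) (hp00 : p 0 0 = 0)
    (hp_sum : ∑ i ∈ Finset.Icc (-1 : ℤ) 1, ∑ j ∈ Finset.Icc (-1 : ℤ) 1, p i j = 1)
    -- (H2)
    (hH2 : ∀ k : Fin 8, ¬ (cyclicList p k = 0 ∧ cyclicList p (k + 1) = 0 ∧
      cyclicList p (k + 2) = 0)) :
    (∑ i ∈ Finset.Icc (-1 : ℤ) 1, ∑ j ∈ Finset.Icc (-1 : ℤ) 1, (i : ℝ) * (j : ℝ) * p i j) ^ 2 <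
        (∑ i ∈ Finset.Icc (-1 : ℤ) 1, ∑ j ∈ Finset.Icc (-1 : ℤ) 1, (i : ℝ) ^ 2 * p i j) *
          (∑ i ∈ Finset.Icc (-1 : ℤ) 1, ∑ j ∈ Finset.Icc (-1 : ℤ) 1, (j : ℝ) ^ 2 * p i j) ∧
      0 < ∑ i ∈ Finset.Icc (-1 : ℤ) 1, ∑ j ∈ Finset.Icc (-1 : ℤ) 1, (i : ℝ) ^ 2 * p i j ∧
      0 < ∑ i ∈ Finset.Icc (-1 : ℤ) 1, ∑ j ∈ Finset.Icc (-1 : ℤ) 1, (j : ℝ) ^ 2 * p i j ∧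
      0 < walkAngle p ∧ walkAngle p < Real.pi :=
  strict_cauchy_schwarz_and_angle_general p hp_nonneg hH2
end

section
/- Let r > 0 and let p be a nonzero real number. Define w(x) = x / ((x − p)(x − r²/p)) for x ∈ C outside the poles. Then for every complex number x with |x| = r, x ≠ p and x ≠ r²/p, one has w(x) = w(x̄), where x̄ denotes the complex conjugate of x; in particular w takes real values on the circle |x| = r. -/
/-! Since `p * (r² / p) = r²`, the candidate `x ↦ x / ((x - p) (x - r²/p))` is invariant under the
inversion `x ↦ r² / x`, which on the circle `‖x‖ = r` is complex conjugation. As the candidate has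
real coefficients, conjugating `x` also conjugates the value, which is therefore real. -/

open Complex

section GluingCandidate

variable {K : Type*} [Field K]

def gluingCandidate (p q x : K) : K := x / ((x - p) * (x - q))

theorem gluingCandidate_mul_div {p q : K} (hp : p ≠ 0) (hq : q ≠ 0) (x : K) :
    gluingCandidate p q (p * q / x) = gluingCandidate p q x := by
  unfold gluingCandidate
  -- at `0` and at the poles both sides are `0`, the poles through the convention `a / 0 = 0`
  rcases eq_or_ne x 0 with rfl | hx
  · simp
  rcases eq_or_ne x p with rfl | hxp
  · simp [mul_div_cancel_left₀ q hx]
  rcases eq_or_ne x q with rfl | hxq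
  · simp [mul_div_cancel_right₀ p hx]
  have hxp' : x - p ≠ 0 := sub_ne_zero.mpr hxp
  have hxq' : x - q ≠ 0 := sub_ne_zero.mpr hxq
  field_simp
  ring

theorem map_gluingCandidate {L : Type*} [Field L] (σ : K →+* L) (p q x : K) :
    σ (gluingCandidate p q x) = gluingCandidate (σ p) (σ q) (σ x) := by
  simp only [gluingCandidate, map_div₀, map_mul, map_sub]

end GluingCandidate

theorem RCLike.conj_eq_sq_norm_div {𝕜 : Type*} [RCLike 𝕜] (x : 𝕜) :
    starRingEnd 𝕜 x = (‖x‖ : 𝕜) ^ 2 / x := by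
  rcases eq_or_ne x 0 with rfl | hx
  · simp
  rw [eq_div_iff hx, mul_comm, RCLike.mul_conj]

theorem conformal_candidate_symmetric_on_circle_general (r : ℝ) (hr : 0 < r) (p : ℝ) (hp : p ≠ 0)
    (w : ℂ → ℂ)
    (hw : ∀ x : ℂ, w x = x / ((x - (p : ℂ)) * (x - ((r : ℂ) ^ 2 / (p : ℂ)))))
    (x : ℂ) (hx : ‖x‖ = r) :
    w x = w ((starRingEnd ℂ) x) ∧ (w x).im = 0 := by
  obtain rfl : w = gluingCandidate (p : ℂ) ((r : ℂ) ^ 2 / p) := funext hw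
  set q : ℂ := (r : ℂ) ^ 2 / p
  have hpc : (p : ℂ) ≠ 0 := ofReal_ne_zero.mpr hp
  have hqc : q ≠ 0 := div_ne_zero (pow_ne_zero 2 (ofReal_ne_zero.mpr hr.ne')) hpc
  have hpq : (p : ℂ) * q = (r : ℂ) ^ 2 := mul_div_cancel₀ _ hpc
  have hsymm : gluingCandidate (p : ℂ) q x = gluingCandidate (p : ℂ) q (starRingEnd ℂ x) := by
    rw [RCLike.conj_eq_sq_norm_div, RCLike.ofReal_eq_complex_ofReal, hx, ← hpq,
      gluingCandidate_mul_div hpc hqc]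
  refine ⟨hsymm, conj_eq_iff_im.mp ?_⟩
  rw [map_gluingCandidate, hsymm]
  simp only [q, map_div₀, map_pow, conj_ofReal]

theorem conformal_candidate_symmetric_on_circle (r : ℝ) (hr : 0 < r) (p : ℝ) (hp : p ≠ 0)
    (w : ℂ → ℂ)
    (hw : ∀ x : ℂ, w x = x / ((x - (p : ℂ)) * (x - ((r : ℂ) ^ 2 / (p : ℂ)))))
    (x : ℂ) (hx : ‖x‖ = r) (hxp : x ≠ (p : ℂ)) (hxq : x ≠ (r : ℂ) ^ 2 / (p : ℂ)) :
    w x = w ((starRingEnd ℂ) x) ∧ (w x).im = 0 :=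
  conformal_candidate_symmetric_on_circle_general r hr p hp w hw x hx
end
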